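/- arXiv:1705.01535 — 6 statements merged into one kernel-verified Lean document; each statement's English description precedes it below -/
import Mathlib

section
/- Let (f, ≺) be a flow on an open graph (G, I, O) with |I| = |O| = n. Then the flow paths {P_i : i ∈ I} are pairwise disjoint and their union is all of V; equivalently, every vertex of V lies on exactly one flow path P_i. -/
/-- One step of iterating the flow function: allowed only from a non-output vertex. -/
def flowStep {V : Type*} (O : Set V) (f : V → V) : V → V → Prop :=
  fun u v => u ∉ O ∧ f u = v

/-- The flow path of a vertex `i`: the set {i, f(i), f(f(i)), …} obtained by iterating
`f` from `i` for as long as the current vertex lies in O^C. -/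
def flowPath {V : Type*} (O : Set V) (f : V → V) (i : V) : Set V :=
  {v | Relation.ReflTransGen (flowStep O f) i v}

/-! If `f u = f w` for `u, w ∉ O`, then (F3) puts `w` in `N(f u)` and `u` in `N(f w)`, so (F2) gives
`u ≺ w ≺ u` unless `u = w`; hence `f` is injective on `Oᶜ`, and as it maps `Oᶜ` into `Iᶜ` with
`|Oᶜ| = |Iᶜ|`, it is a bijection `Oᶜ → Iᶜ`. So every vertex outside `I` has exactly one predecessor
under `f`, and none inside `I` has any. Following predecessors from `v` strictly decreases `≺` (F1),
so on a finite vertex set the backward chain ends, necessarily in `I`, and it is unique.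
-/

namespace Relation

variable {α : Type*} {r : α → α → Prop} {I : Set α}

theorem exists_mem_reflTransGen_of_wellFounded (hwf : WellFounded r)
    (hpred : ∀ v ∉ I, ∃ u, r u v) (v : α) : ∃ i ∈ I, ReflTransGen r i v := by
  induction v using hwf.induction with
  | _ v ih =>
    by_cases hv : v ∈ I
    · exact ⟨v, hv, .refl⟩
    · obtain ⟨u, huv⟩ := hpred v hv
      obtain ⟨i, hi, hiu⟩ := ih u huv
      exact ⟨i, hi, hiu.tail huv⟩

theorem eq_of_reflTransGen_of_left_unique (hinj : ∀ a b c, r a c → r b c → a = b)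
    (hI : ∀ a, ∀ i ∈ I, ¬ r a i) {i j v : α} (hi : i ∈ I) (hj : j ∈ I)
    (hiv : ReflTransGen r i v) (hjv : ReflTransGen r j v) : i = j := by
  induction hiv generalizing j with
  | refl =>
    rcases hjv.cases_tail with rfl | ⟨w, -, hwi⟩
    · rfl
    · exact absurd hwi (hI w _ hi)
  | tail _ hbc ih =>
    rcases hjv.cases_tail with rfl | ⟨w, hjw, hwc⟩
    · exact absurd hbc (hI _ _ hj)
    · exact ih hj (hinj _ _ _ hbc hwc ▸ hjw)

end Relation

theorem Set.image_eq_of_mapsTo_of_injOn_of_ncard_eq {α β : Type*} [Finite β] {f : α → β}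
    {s : Set α} {t : Set β} (hf : MapsTo f s t) (hinj : InjOn f s) (hcard : s.ncard = t.ncard) :
    f '' s = t :=
  eq_of_subset_of_ncard_le hf.image_subset (by rw [hinj.ncard_image, hcard])

section Flow

variable {V : Type*} {G : SimpleGraph V} {O : Set V} {f : V → V} {prec : V → V → Prop}

theorem injOn_compl_of_flow (hirr : ∀ v, ¬ prec v v)
    (htrans : ∀ a b c, prec a b → prec b c → prec a c)
    (hF2 : ∀ i, i ∉ O → ∀ j, G.Adj (f i) j → j = i ∨ prec i j)
    (hF3 : ∀ i, i ∉ O → G.Adj i (f i)) : Set.InjOn f Oᶜ := by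
  intro u hu w hw hfuw
  have hwu : w = u ∨ prec u w := hF2 u hu w (hfuw ▸ (hF3 w hw).symm)
  have huw : u = w ∨ prec w u := hF2 w hw u (hfuw ▸ (hF3 u hu).symm)
  rcases hwu with hwu | hwu
  · exact hwu.symm
  rcases huw with huw | huw
  · exact huw
  exact absurd (htrans u w u hwu huw) (hirr u)

theorem flowStep_left_unique (hinj : Set.InjOn f Oᶜ) (a b c : V)
    (hac : flowStep O f a c) (hbc : flowStep O f b c) : a = b :=
  hinj hac.1 hbc.1 (hac.2.trans hbc.2.symm)

theorem wellFounded_flowStep [Finite V] (hirr : ∀ v, ¬ prec v v)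
    (htrans : ∀ a b c, prec a b → prec b c → prec a c)
    (hF1 : ∀ i, i ∉ O → prec i (f i)) : WellFounded (flowStep O f) :=
  haveI : Std.Irrefl prec := ⟨hirr⟩
  haveI : IsTrans V prec := ⟨htrans⟩
  Subrelation.wf (fun {u _} h => h.2 ▸ hF1 u h.1) (Finite.wellFounded_of_trans_of_irrefl prec)

end Flow

/-- Let (f, ≺) be a flow on an open graph (G, I, O) with |I| = |O| = n.
Then the flow paths {P_i : i ∈ I} are pairwise disjoint and their union is all of V;
equivalently, every vertex of V lies on exactly one flow path P_i. -/
theorem flow_paths_partition {V : Type*} [Fintype V]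
    (G : SimpleGraph V) (I O : Set V) (n : ℕ)
    (hI : I.ncard = n) (hO : O.ncard = n)
    (f : V → V) (prec : V → V → Prop)
    (hmap : ∀ v, v ∉ O → f v ∉ I)
    (hirr : ∀ v, ¬ prec v v)
    (htrans : ∀ a b c, prec a b → prec b c → prec a c)
    (hF1 : ∀ i, i ∉ O → prec i (f i))
    (hF2 : ∀ i, i ∉ O → ∀ j, G.Adj (f i) j → j = i ∨ prec i j)
    (hF3 : ∀ i, i ∉ O → G.Adj i (f i)) :
    ∀ v : V, ∃! i, i ∈ I ∧ v ∈ flowPath O f i := by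
  have hinj : Set.InjOn f Oᶜ := injOn_compl_of_flow hirr htrans hF2 hF3
  have himage : f '' Oᶜ = Iᶜ :=
    Set.image_eq_of_mapsTo_of_injOn_of_ncard_eq hmap hinj
      (by rw [Set.ncard_compl, Set.ncard_compl, hI, hO])
  have hpred : ∀ v ∉ I, ∃ u, flowStep O f u v := fun v hv => by
    obtain ⟨u, hu, hfu⟩ : v ∈ f '' Oᶜ := himage ▸ hv
    exact ⟨u, hu, hfu⟩
  have hnot_into_I : ∀ a, ∀ i ∈ I, ¬ flowStep O f a i := fun a i hi hai =>
    hmap a hai.1 (hai.2 ▸ hi)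
  intro v
  obtain ⟨i, hi, hiv⟩ :=
    Relation.exists_mem_reflTransGen_of_wellFounded (wellFounded_flowStep hirr htrans hF1) hpred v
  exact ⟨i, ⟨hi, hiv⟩, fun j ⟨hj, hjv⟩ =>
    Relation.eq_of_reflTransGen_of_left_unique (flowStep_left_unique hinj) hnot_into_I hj hi hjv hiv⟩
end

section
/- (Lemma 1, existence part.) Let (f, ≺) be a flow on an open graph (G, I, O) with |I| = |O| = n, let < be a measurement order, and let w ∈ O^C. Then for every input i ∈ I, the flow path P_i contains at least one member of Q_w, i.e., P_i ∩ Q_w ≠ ∅. -/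
/-- M_w: the qubits measured strictly before w. -/
def measuredSet {V : Type*} (O : Set V) (lt : V → V → Prop) (w : V) : Set V :=
  {v | v ∉ O ∧ lt v w}

/-- U_w: the unmeasured qubits other than w, i.e. V \ (M_w ∪ {w}). -/
def unmeasuredSet {V : Type*} (O : Set V) (lt : V → V → Prop) (w : V) : Set V :=
  (measuredSet O lt w ∪ {w})ᶜ

/-- Q_w = N_w ∪ I_w ∪ O_w, where N_w = N(w) ∩ U_w, I_w = I ∩ U_w and
O_w = {v ∈ U_w : N(v) ∩ M_w ≠ ∅}. -/
def requiredSet {V : Type*} (G : SimpleGraph V) (I O : Set V)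
    (lt : V → V → Prop) (w : V) : Set V :=
  (G.neighborSet w ∩ unmeasuredSet O lt w) ∪ (I ∩ unmeasuredSet O lt w) ∪
    {v ∈ unmeasuredSet O lt w | (G.neighborSet v ∩ measuredSet O lt w).Nonempty}

/-!
Walk along the flow path of an input `i`. While it stays inside the measured set `M_w`
it never reaches an output, and by (F1) it climbs strictly in the measurement order, so in
a finite graph it must leave `M_w`. Let `v` be the first vertex outside `M_w`. If `v = w`,
the next vertex `f w` is a neighbour of `w` measured after `w`, hence lies in `N_w`.
Otherwise `v` is unmeasured: either `v = i ∈ I_w`, or its predecessor on the path is a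
measured neighbour (F3), so `v ∈ O_w`.
-/

lemma exists_iterate_notMem_of_strict_step {V : Type*} [Finite V] {S : Set V}
    {r : V → V → Prop} {f : V → V}
    (hirr : ∀ x ∈ S, ¬ r x x)
    (htrans : ∀ a ∈ S, ∀ b ∈ S, ∀ c ∈ S, r a b → r b c → r a c)
    (hstep : ∀ x ∈ S, f x ∈ S → r x (f x)) (x : V) :
    ∃ k, f^[k] x ∉ S := by
  by_contra! hS
  have hnext : ∀ b, r (f^[b] x) (f^[b + 1] x) := fun b => by
    simpa only [Function.iterate_succ_apply'] using
      hstep _ (hS b) (Function.iterate_succ_apply' f b x ▸ hS (b + 1))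
  have hchain : ∀ a b, a < b → r (f^[a] x) (f^[b] x) := by
    intro a b hab
    induction b, hab using Nat.le_induction with
    | base => exact hnext a
    | succ b hab ih => exact htrans _ (hS a) _ (hS b) _ (hS (b + 1)) ih (hnext b)
  obtain ⟨a, b, hab, heq⟩ := Finite.exists_ne_map_eq_of_infinite (fun k => f^[k] x)
  rcases hab.lt_or_gt with h | h
  · exact hirr _ (hS a) (by simpa [heq] using hchain a b h)
  · exact hirr _ (hS b) (by simpa [heq] using hchain b a h)

lemma exists_mem_flowPath_notMem {V : Type*} {O S : Set V} {f : V → V}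
    (hS : ∀ x ∈ S, x ∉ O) {k : ℕ} {i : V} (hk : f^[k] i ∉ S) :
    ∃ v ∈ flowPath O f i, v ∉ S ∧ (v = i ∨ ∃ u ∈ S, f u = v) := by
  induction k generalizing i with
  | zero => exact ⟨i, Relation.ReflTransGen.refl, hk, Or.inl rfl⟩
  | succ k ih =>
    by_cases hi : i ∈ S
    · obtain ⟨v, hvP, hvS, hv⟩ := ih (i := f i) hk
      refine ⟨v, Relation.ReflTransGen.head ⟨hS i hi, rfl⟩ hvP, hvS, Or.inr ?_⟩
      rcases hv with rfl | hv
      · exact ⟨i, hi, rfl⟩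
      · exact hv
    · exact ⟨i, Relation.ReflTransGen.refl, hi, Or.inl rfl⟩

lemma mem_unmeasuredSet {V : Type*} {O : Set V} {lt : V → V → Prop} {w v : V} :
    v ∈ unmeasuredSet O lt w ↔ v ∉ measuredSet O lt w ∧ v ≠ w := by
  simp [unmeasuredSet, and_comm]

lemma flow_apply_mem_requiredSet {V : Type*} {G : SimpleGraph V} {I O : Set V}
    {f : V → V} {prec lt : V → V → Prop}
    (hF1 : ∀ i, i ∉ O → prec i (f i)) (hF3 : ∀ i, i ∉ O → G.Adj i (f i))
    (hlt_irr : ∀ v, v ∉ O → ¬ lt v v)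
    (hlt_trans : ∀ a b c, a ∉ O → b ∉ O → c ∉ O → lt a b → lt b c → lt a c)
    (hlt_ext : ∀ u v, u ∉ O → v ∉ O → prec u v → lt u v) {w : V} (hw : w ∉ O) :
    f w ∈ requiredSet G I O lt w := by
  have hlt : f w ∉ O → lt w (f w) := fun hfw => hlt_ext w (f w) hw hfw (hF1 w hw)
  have hnotM : f w ∉ measuredSet O lt w := fun ⟨hfw, hlt'⟩ =>
    hlt_irr w hw (hlt_trans w (f w) w hw hfw hw (hlt hfw) hlt')
  have hne : f w ≠ w := fun h => hlt_irr w hw (by simpa only [h] using hlt (h.symm ▸ hw))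
  exact Or.inl (Or.inl ⟨hF3 w hw, mem_unmeasuredSet.2 ⟨hnotM, hne⟩⟩)

theorem flow_path_meets_required_set_general {V : Type*} [Fintype V]
    (G : SimpleGraph V) (I O : Set V)
    (f : V → V) (prec : V → V → Prop)
    (hF1 : ∀ i, i ∉ O → prec i (f i))
    (hF3 : ∀ i, i ∉ O → G.Adj i (f i))
    (lt : V → V → Prop)
    (hlt_irr : ∀ v, v ∉ O → ¬ lt v v)
    (hlt_trans : ∀ a b c, a ∉ O → b ∉ O → c ∉ O → lt a b → lt b c → lt a c)
    (hlt_ext : ∀ u v, u ∉ O → v ∉ O → prec u v → lt u v)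
    (w : V) (hw : w ∉ O) :
    ∀ i ∈ I, (flowPath O f i ∩ requiredSet G I O lt w).Nonempty := by
  intro i hi
  have hM : ∀ x ∈ measuredSet O lt w, x ∉ O := fun x hx => hx.1
  obtain ⟨k, hk⟩ := exists_iterate_notMem_of_strict_step (f := f)
    (fun x hx => hlt_irr x (hM x hx))
    (fun a ha b hb c hc => hlt_trans a b c (hM a ha) (hM b hb) (hM c hc))
    (fun x hx hfx => hlt_ext x (f x) (hM x hx) (hM _ hfx) (hF1 x (hM x hx))) i
  obtain ⟨v, hvP, hvM, hv⟩ := exists_mem_flowPath_notMem hM hk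
  by_cases hvw : v = w
  · subst hvw
    exact ⟨f v, hvP.tail ⟨hw, rfl⟩,
      flow_apply_mem_requiredSet hF1 hF3 hlt_irr hlt_trans hlt_ext hw⟩
  have hvU : v ∈ unmeasuredSet O lt w := mem_unmeasuredSet.2 ⟨hvM, hvw⟩
  rcases hv with rfl | ⟨u, hu, rfl⟩
  · exact ⟨v, hvP, Or.inl (Or.inr ⟨hi, hvU⟩)⟩
  · exact ⟨f u, hvP, Or.inr ⟨hvU, u, (hF3 u hu.1).symm, hu⟩⟩

/-- Lemma 1, existence part: Let (f, ≺) be a flow on an open graph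
(G, I, O) with |I| = |O| = n, let < be a measurement order, and let w ∈ O^C. Then for
every input i ∈ I, the flow path P_i contains at least one member of Q_w. -/
theorem flow_path_meets_required_set {V : Type*} [Fintype V]
    (G : SimpleGraph V) (I O : Set V) (n : ℕ)
    (hI : I.ncard = n) (hO : O.ncard = n)
    (f : V → V) (prec : V → V → Prop)
    (hmap : ∀ v, v ∉ O → f v ∉ I)
    (hirr : ∀ v, ¬ prec v v)
    (htrans : ∀ a b c, prec a b → prec b c → prec a c)
    (hF1 : ∀ i, i ∉ O → prec i (f i))
    (hF2 : ∀ i, i ∉ O → ∀ j, G.Adj (f i) j → j = i ∨ prec i j)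
    (hF3 : ∀ i, i ∉ O → G.Adj i (f i))
    (lt : V → V → Prop)
    (hlt_irr : ∀ v, v ∉ O → ¬ lt v v)
    (hlt_trans : ∀ a b c, a ∉ O → b ∉ O → c ∉ O → lt a b → lt b c → lt a c)
    (hlt_total : ∀ u v, u ∉ O → v ∉ O → u ≠ v → lt u v ∨ lt v u)
    (hlt_ext : ∀ u v, u ∉ O → v ∉ O → prec u v → lt u v)
    (w : V) (hw : w ∉ O) :
    ∀ i ∈ I, (flowPath O f i ∩ requiredSet G I O lt w).Nonempty :=
  flow_path_meets_required_set_general G I O f prec hF1 hF3 lt hlt_irr hlt_trans hlt_ext w hw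
end

section
/- (Lemma 1, uniqueness part.) Let (f, ≺) be a flow on an open graph (G, I, O) with |I| = |O| = n, let < be a measurement order, and let w ∈ O^C. If u, v ∈ Q_w and u ≠ v, then u and v do not lie on the same flow path, i.e., there is no i ∈ I with u ∈ P_i and v ∈ P_i. -/
/-!
Two vertices of one flow path are comparable along it, so it suffices to rule out a chain
`u →* x → v = f x` with `u, v ∈ Q_w`. As `f` avoids inputs, `v` is adjacent to `w` or to some
`m ∈ M_w`, and (F2) at `x` yields `x ∈ M_w ∪ {w}`. Since `y ≺ f y`, the set `M_w ∪ {w}` is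
closed under flow predecessors, so `u ∈ M_w ∪ {w}`, contradicting `u ∈ Q_w ⊆ U_w`.
-/

section

variable {V : Type*} {G : SimpleGraph V} {I O : Set V} {f : V → V}
  {prec lt : V → V → Prop} {w : V}

lemma flowStep_rightUnique : Relator.RightUnique (flowStep O f) := by
  rintro a b c ⟨-, rfl⟩ ⟨-, rfl⟩
  rfl

lemma reflTransGen_or_of_mem_flowPath {i u v : V} (hu : u ∈ flowPath O f i)
    (hv : v ∈ flowPath O f i) :
    Relation.ReflTransGen (flowStep O f) u v ∨ Relation.ReflTransGen (flowStep O f) v u :=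
  Relation.ReflTransGen.total_of_right_unique flowStep_rightUnique hu hv

lemma requiredSet_subset_unmeasuredSet : requiredSet G I O lt w ⊆ unmeasuredSet O lt w := by
  rintro v ((⟨-, h⟩ | ⟨-, h⟩) | ⟨h, -⟩) <;> exact h

lemma mem_measuredSet_of_flowStep
    (hF1 : ∀ i, i ∉ O → prec i (f i))
    (hlt_trans : ∀ a b c, a ∉ O → b ∉ O → c ∉ O → lt a b → lt b c → lt a c)
    (hlt_ext : ∀ u v, u ∉ O → v ∉ O → prec u v → lt u v)
    (hw : w ∉ O) {y z : V} (hyz : flowStep O f y z)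
    (hz : z ∈ measuredSet O lt w ∪ {w}) : y ∈ measuredSet O lt w := by
  obtain ⟨hyO, rfl⟩ := hyz
  refine ⟨hyO, ?_⟩
  rcases hz with ⟨hzO, hzw⟩ | rfl
  · exact hlt_trans _ _ _ hyO hzO hw (hlt_ext _ _ hyO hzO (hF1 y hyO)) hzw
  · exact hlt_ext _ _ hyO hw (hF1 y hyO)

lemma mem_measuredSet_union_of_reflTransGen
    (hF1 : ∀ i, i ∉ O → prec i (f i))
    (hlt_trans : ∀ a b c, a ∉ O → b ∉ O → c ∉ O → lt a b → lt b c → lt a c)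
    (hlt_ext : ∀ u v, u ∉ O → v ∉ O → prec u v → lt u v)
    (hw : w ∉ O) {u x : V} (hux : Relation.ReflTransGen (flowStep O f) u x)
    (hx : x ∈ measuredSet O lt w ∪ {w}) : u ∈ measuredSet O lt w ∪ {w} := by
  induction hux with
  | refl => exact hx
  | tail _ hbc ih =>
    exact ih (Or.inl (mem_measuredSet_of_flowStep hF1 hlt_trans hlt_ext hw hbc hx))

lemma mem_measuredSet_union_of_flowStep_mem_requiredSet
    (hmap : ∀ v, v ∉ O → f v ∉ I)
    (hF2 : ∀ i, i ∉ O → ∀ j, G.Adj (f i) j → j = i ∨ prec i j)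
    (hlt_trans : ∀ a b c, a ∉ O → b ∉ O → c ∉ O → lt a b → lt b c → lt a c)
    (hlt_ext : ∀ u v, u ∉ O → v ∉ O → prec u v → lt u v)
    (hw : w ∉ O) {x v : V} (hxv : flowStep O f x v) (hv : v ∈ requiredSet G I O lt w) :
    x ∈ measuredSet O lt w ∪ {w} := by
  obtain ⟨hxO, rfl⟩ := hxv
  rcases hv with (⟨hadj, -⟩ | ⟨hI, -⟩) | ⟨-, m, hadj, hmO, hmw⟩
  · rcases hF2 x hxO w hadj.symm with rfl | hxw
    · exact Or.inr rfl
    · exact Or.inl ⟨hxO, hlt_ext _ _ hxO hw hxw⟩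
  · exact absurd hI (hmap x hxO)
  · rcases hF2 x hxO m hadj with rfl | hxm
    · exact Or.inl ⟨hxO, hmw⟩
    · exact Or.inl ⟨hxO, hlt_trans _ _ _ hxO hmO hw (hlt_ext _ _ hxO hmO hxm) hmw⟩

lemma not_reflTransGen_flowStep_of_mem_requiredSet
    (hmap : ∀ v, v ∉ O → f v ∉ I)
    (hF1 : ∀ i, i ∉ O → prec i (f i))
    (hF2 : ∀ i, i ∉ O → ∀ j, G.Adj (f i) j → j = i ∨ prec i j)
    (hlt_trans : ∀ a b c, a ∉ O → b ∉ O → c ∉ O → lt a b → lt b c → lt a c)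
    (hlt_ext : ∀ u v, u ∉ O → v ∉ O → prec u v → lt u v)
    (hw : w ∉ O) {u v : V} (hu : u ∈ requiredSet G I O lt w)
    (hv : v ∈ requiredSet G I O lt w) (huv : u ≠ v) :
    ¬ Relation.ReflTransGen (flowStep O f) u v := by
  intro hreach
  obtain rfl | ⟨x, hux, hxv⟩ := hreach.cases_tail
  · exact huv rfl
  have hx :=
    mem_measuredSet_union_of_flowStep_mem_requiredSet hmap hF2 hlt_trans hlt_ext hw hxv hv
  exact requiredSet_subset_unmeasuredSet hu
    (mem_measuredSet_union_of_reflTransGen hF1 hlt_trans hlt_ext hw hux hx)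

end

theorem required_set_members_on_distinct_paths_general {V : Type*}
    (G : SimpleGraph V) (I O : Set V)
    (f : V → V) (prec : V → V → Prop)
    (hmap : ∀ v, v ∉ O → f v ∉ I)
    (hF1 : ∀ i, i ∉ O → prec i (f i))
    (hF2 : ∀ i, i ∉ O → ∀ j, G.Adj (f i) j → j = i ∨ prec i j)
    (lt : V → V → Prop)
    (hlt_trans : ∀ a b c, a ∉ O → b ∉ O → c ∉ O → lt a b → lt b c → lt a c)
    (hlt_ext : ∀ u v, u ∉ O → v ∉ O → prec u v → lt u v)
    (w : V) (hw : w ∉ O) :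
    ∀ u ∈ requiredSet G I O lt w, ∀ v ∈ requiredSet G I O lt w, u ≠ v →
      ¬ ∃ i ∈ I, u ∈ flowPath O f i ∧ v ∈ flowPath O f i := by
  rintro u hu v hv huv ⟨i, -, hiu, hiv⟩
  rcases reflTransGen_or_of_mem_flowPath hiu hiv with huv' | hvu
  · exact not_reflTransGen_flowStep_of_mem_requiredSet hmap hF1 hF2 hlt_trans hlt_ext hw
      hu hv huv huv'
  · exact not_reflTransGen_flowStep_of_mem_requiredSet hmap hF1 hF2 hlt_trans hlt_ext hw
      hv hu huv.symm hvu

/-- Lemma 1, uniqueness part: Let (f, ≺) be a flow on an open graph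
(G, I, O) with |I| = |O| = n, let < be a measurement order, and let w ∈ O^C. Then for
u, v ∈ Q_w with u ≠ v, u and v do not lie on the same flow path: there is no i ∈ I
with u ∈ P_i and v ∈ P_i. -/
theorem required_set_members_on_distinct_paths {V : Type*} [Fintype V]
    (G : SimpleGraph V) (I O : Set V) (n : ℕ)
    (hI : I.ncard = n) (hO : O.ncard = n)
    (f : V → V) (prec : V → V → Prop)
    (hmap : ∀ v, v ∉ O → f v ∉ I)
    (hirr : ∀ v, ¬ prec v v)
    (htrans : ∀ a b c, prec a b → prec b c → prec a c)
    (hF1 : ∀ i, i ∉ O → prec i (f i))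
    (hF2 : ∀ i, i ∉ O → ∀ j, G.Adj (f i) j → j = i ∨ prec i j)
    (hF3 : ∀ i, i ∉ O → G.Adj i (f i))
    (lt : V → V → Prop)
    (hlt_irr : ∀ v, v ∉ O → ¬ lt v v)
    (hlt_trans : ∀ a b c, a ∉ O → b ∉ O → c ∉ O → lt a b → lt b c → lt a c)
    (hlt_total : ∀ u v, u ∉ O → v ∉ O → u ≠ v → lt u v ∨ lt v u)
    (hlt_ext : ∀ u v, u ∉ O → v ∉ O → prec u v → lt u v)
    (w : V) (hw : w ∉ O) :
    ∀ u ∈ requiredSet G I O lt w, ∀ v ∈ requiredSet G I O lt w, u ≠ v →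
      ¬ ∃ i ∈ I, u ∈ flowPath O f i ∧ v ∈ flowPath O f i :=
  required_set_members_on_distinct_paths_general G I O f prec hmap hF1 hF2 lt hlt_trans hlt_ext w hw
end

section
/- Define g on O^C = {i_1, …, i_n} ∪ {v_{n+1}, …, v_{m'}} by g(i_j) = {v_j, v_{n−1}} for 1 ≤ j ≤ n−2, g(v_j) = {v_{j−2}, v_{j−1}} for n+1 ≤ j ≤ m', g(i_{n−1}) = {v_{m'−1}, v_{m'}}, and g(i_n) = {v_{m'}}. Then there exists a strict partial order ≺ on the vertex set of H_n such that (g, ≺) is a gflow on the open graph (H_n, I, O). -/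
/-!
Order the vertices as `i_n`, then the other inputs, then the outputs `v_{m'}, …, v_1` in
decreasing index. Each `g(i)` consists of one or two outputs, so whether a vertex lies in
`Odd(g(i))` is decided by its adjacency to them, and in the complement `H_n` this is read off from
the few edges of `H^C_n`. For `j < n` the only input in `Odd(g(i_j))` is `i_j`, no input lies in
`Odd(g(v_c))`, and an output `v_k` lies in `Odd(g(v_c))` only if `k ≤ c`; `Odd(g(i_n))` contains
further inputs, which is why `i_n` comes first.
-/

/-- The graph H^C_n on the m-element vertex set {i_1, …, i_n, v_1, …, v_{m'}}
(with m' = m − n), modelled as `Fin n ⊕ Fin (m - n)` where `Sum.inl ⟨j-1,_⟩ = i_j`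
and `Sum.inr ⟨k-1,_⟩ = v_k` (0-indexed).  Its edges are {i_j, v_j} for 1 ≤ j ≤ n−2,
{v_{n+j}, v_{n+j+1}} for 0 ≤ j ≤ m'−n−1, and {i_{n−1}, v_{m'}}. -/
def HC (n m : ℕ) : SimpleGraph (Fin n ⊕ Fin (m - n)) :=
  SimpleGraph.fromRel (fun u v =>
    (∃ (j : Fin n) (k : Fin (m - n)), u = Sum.inl j ∧ v = Sum.inr k ∧
        (j : ℕ) = (k : ℕ) ∧ (j : ℕ) + 1 ≤ n - 2) ∨
    (∃ (a b : Fin (m - n)), u = Sum.inr a ∧ v = Sum.inr b ∧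
        (b : ℕ) = (a : ℕ) + 1 ∧ n - 1 ≤ (a : ℕ)) ∨
    (∃ (j : Fin n) (k : Fin (m - n)), u = Sum.inl j ∧ v = Sum.inr k ∧
        (j : ℕ) + 1 = n - 1 ∧ (k : ℕ) + 1 = m - n))

/-- The input set I = {i_1, …, i_n}. -/
def Iset (n m : ℕ) : Set (Fin n ⊕ Fin (m - n)) :=
  {x | ∃ j : Fin n, x = Sum.inl j}

/-- The output set O = {v_1, …, v_n}. -/
def Oset (n m : ℕ) : Set (Fin n ⊕ Fin (m - n)) :=
  {x | ∃ k : Fin (m - n), x = Sum.inr k ∧ (k : ℕ) < n}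

/-- The candidate gflow function g on O^C:
g(i_j) = {v_j, v_{n−1}} for 1 ≤ j ≤ n−2, g(v_j) = {v_{j−2}, v_{j−1}} for n+1 ≤ j ≤ m',
g(i_{n−1}) = {v_{m'−1}, v_{m'}}, and g(i_n) = {v_{m'}}  (1-indexed, with m' = m − n). -/
def gfun (n m : ℕ) (u : Fin n ⊕ Fin (m - n)) : Set (Fin n ⊕ Fin (m - n)) :=
  {x | ∃ a : Fin (m - n), x = Sum.inr a ∧
    ((∃ j : Fin n, u = Sum.inl j ∧ (j : ℕ) + 1 ≤ n - 2 ∧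
        ((a : ℕ) = (j : ℕ) ∨ (a : ℕ) + 1 = n - 1)) ∨
     (∃ j : Fin n, u = Sum.inl j ∧ (j : ℕ) + 1 = n - 1 ∧
        ((a : ℕ) + 2 = m - n ∨ (a : ℕ) + 1 = m - n)) ∨
     (∃ j : Fin n, u = Sum.inl j ∧ (j : ℕ) + 1 = n ∧ (a : ℕ) + 1 = m - n) ∨
     (∃ b : Fin (m - n), u = Sum.inr b ∧ n ≤ (b : ℕ) ∧
        ((a : ℕ) + 2 = (b : ℕ) ∨ (a : ℕ) + 1 = (b : ℕ))))}

open Sum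

theorem Set.odd_ncard_inter_pair {α : Type*} {s : Set α} {a b : α} (hab : a ≠ b) :
    Odd (s ∩ {a, b}).ncard ↔ (a ∈ s ↔ b ∉ s) := by
  by_cases ha : a ∈ s <;> by_cases hb : b ∈ s <;>
    simp [Set.inter_comm s, Set.insert_inter_of_mem, Set.insert_inter_of_notMem, ha, hb, hab]

theorem Set.odd_ncard_inter_singleton {α : Type*} {s : Set α} {a : α} :
    Odd (s ∩ {a}).ncard ↔ a ∈ s := by
  by_cases ha : a ∈ s <;> simp [Set.inter_comm s, ha]

namespace SimpleGraph

variable {V : Type*} (G : SimpleGraph V)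

/-- `Odd(K)` in the notation of gflows. -/
def oddNeighborSet (K : Set V) : Set V :=
  {x | Odd (G.neighborSet x ∩ K).ncard}

variable {G}

theorem mem_oddNeighborSet_pair {a b x : V} (hab : a ≠ b) :
    x ∈ G.oddNeighborSet {a, b} ↔ (G.Adj x a ↔ ¬ G.Adj x b) :=
  Set.odd_ncard_inter_pair hab

theorem mem_oddNeighborSet_singleton {a x : V} :
    x ∈ G.oddNeighborSet {a} ↔ G.Adj x a :=
  Set.odd_ncard_inter_singleton

end SimpleGraph

open SimpleGraph

section

variable {n m : ℕ}

theorem compl_HC_adj_inl_inr (j : Fin n) (k : Fin (m - n)) :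
    (HC n m)ᶜ.Adj (inl j) (inr k) ↔
      ¬ ((j : ℕ) = k ∧ (j : ℕ) + 1 ≤ n - 2 ∨ (j : ℕ) + 1 = n - 1 ∧ (k : ℕ) + 1 = m - n) := by
  simp [HC]

theorem compl_HC_adj_inr_inr (c k : Fin (m - n)) :
    (HC n m)ᶜ.Adj (inr c) (inr k) ↔ c ≠ k ∧ ¬ ((k : ℕ) = c + 1 ∧ n - 1 ≤ c) ∧
      ¬ ((c : ℕ) = k + 1 ∧ n - 1 ≤ k) := by
  simp [HC]
  tauto

theorem le_of_inr_notMem_Oset {c : Fin (m - n)} (hc : inr c ∉ Oset n m) : n ≤ c := by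
  by_contra! h
  exact hc ⟨c, rfl, h⟩

theorem gfun_inl_of_add_two_lt (hm : 2 * n < m) (j : Fin n) (hj : (j : ℕ) + 2 < n) :
    gfun n m (inl j) = {inr ⟨j, by omega⟩, inr ⟨n - 2, by omega⟩} := by
  ext (i | a) <;> simp [gfun]
  simp [Fin.ext_iff]
  omega

theorem gfun_inl_of_add_two_eq (hm : 2 * n < m) (j : Fin n) (hj : (j : ℕ) + 2 = n) :
    gfun n m (inl j) = {inr ⟨m - n - 2, by omega⟩, inr ⟨m - n - 1, by omega⟩} := by
  ext (i | a) <;> simp [gfun]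
  simp [Fin.ext_iff]
  omega

theorem gfun_inl_of_add_one_eq (hm : 2 * n < m) (j : Fin n) (hj : (j : ℕ) + 1 = n) :
    gfun n m (inl j) = {inr ⟨m - n - 1, by omega⟩} := by
  ext (i | a) <;> simp [gfun]
  simp [Fin.ext_iff]
  omega

theorem gfun_inr_of_le (hn : 2 ≤ n) (c : Fin (m - n)) (hc : n ≤ c) :
    gfun n m (inr c) = {inr ⟨c - 2, by omega⟩, inr ⟨c - 1, by omega⟩} := by
  ext (i | a) <;> simp [gfun]
  simp [Fin.ext_iff]
  omega

theorem inl_mem_oddNeighborSet_gfun_inl_iff (hm : 2 * n < m) {j : Fin n} (hj : (j : ℕ) + 1 < n)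
    (j' : Fin n) : inl j' ∈ (HC n m)ᶜ.oddNeighborSet (gfun n m (inl j)) ↔ j' = j := by
  have := j'.isLt
  obtain hj | hj : (j : ℕ) + 2 < n ∨ (j : ℕ) + 2 = n := by omega
  · rw [gfun_inl_of_add_two_lt hm j hj, mem_oddNeighborSet_pair (by simp [Fin.ext_iff]; omega),
      compl_HC_adj_inl_inr, compl_HC_adj_inl_inr, Fin.ext_iff]
    simp only
    omega
  · rw [gfun_inl_of_add_two_eq hm j hj, mem_oddNeighborSet_pair (by simp [Fin.ext_iff]; omega),
      compl_HC_adj_inl_inr, compl_HC_adj_inl_inr, Fin.ext_iff]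
    simp only
    omega

theorem inl_mem_oddNeighborSet_gfun_inl_of_add_one_eq (hm : 2 * n < m) {j : Fin n}
    (hj : (j : ℕ) + 1 = n) : inl j ∈ (HC n m)ᶜ.oddNeighborSet (gfun n m (inl j)) := by
  rw [gfun_inl_of_add_one_eq hm j hj, mem_oddNeighborSet_singleton, compl_HC_adj_inl_inr]
  omega

theorem inl_notMem_oddNeighborSet_gfun_inr (hn : 2 ≤ n) {c : Fin (m - n)} (hc : n ≤ c)
    (j : Fin n) : inl j ∉ (HC n m)ᶜ.oddNeighborSet (gfun n m (inr c)) := by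
  have := c.isLt
  rw [gfun_inr_of_le hn c hc, mem_oddNeighborSet_pair (by simp [Fin.ext_iff]; omega),
    compl_HC_adj_inl_inr, compl_HC_adj_inl_inr]
  simp only
  omega

theorem le_of_inr_mem_oddNeighborSet_gfun_inr (hn : 2 ≤ n) {c k : Fin (m - n)} (hc : n ≤ c)
    (hk : inr k ∈ (HC n m)ᶜ.oddNeighborSet (gfun n m (inr c))) : k ≤ c := by
  rw [gfun_inr_of_le hn c hc, mem_oddNeighborSet_pair (by simp [Fin.ext_iff]; omega),
    compl_HC_adj_inr_inr, compl_HC_adj_inr_inr] at hk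
  simp only [ne_eq, Fin.ext_iff] at hk
  omega

theorem inr_mem_oddNeighborSet_gfun_inr (hn : 2 ≤ n) {c : Fin (m - n)} (hc : n ≤ c) :
    inr c ∈ (HC n m)ᶜ.oddNeighborSet (gfun n m (inr c)) := by
  rw [gfun_inr_of_le hn c hc, mem_oddNeighborSet_pair (by simp [Fin.ext_iff]; omega),
    compl_HC_adj_inr_inr, compl_HC_adj_inr_inr]
  simp only [ne_eq, Fin.ext_iff]
  omega

def gflowRank (n m : ℕ) : Fin n ⊕ Fin (m - n) → ℕ
  | inl j => if (j : ℕ) + 1 = n then 0 else 1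
  | inr k => m - k

theorem gflowRank_inl_lt_inr (j : Fin n) (k : Fin (m - n)) :
    gflowRank n m (inl j) < gflowRank n m (inr k) := by
  have := j.isLt
  have := k.isLt
  simp only [gflowRank]
  split_ifs <;> omega

theorem gflowRank_inr_lt_inr {c k : Fin (m - n)} (h : k < c) :
    gflowRank n m (inr c) < gflowRank n m (inr k) := by
  have := c.isLt
  simp only [gflowRank]
  omega

theorem gflowRank_inl_lt_inl {j j' : Fin n} (hj : (j : ℕ) + 1 = n) (hj' : j' ≠ j) :
    gflowRank n m (inl j) < gflowRank n m (inl j') := by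
  have := j'.isLt
  simp only [gflowRank]
  split_ifs <;> omega

end

/-- With g as above, there exists a strict partial order ≺ on the vertex
set of H_n = (H^C_n)ᶜ such that (g, ≺) is a gflow on the open graph (H_n, I, O):
g maps O^C into subsets of I^C and for every i ∈ O^C, (G1) every j ∈ g(i) satisfies
i ≺ j, (G2) every j ∈ Odd(g(i)) satisfies j = i or i ≺ j, and (G3) i ∈ Odd(g(i)),
where Odd(K) = {k : |N(k) ∩ K| is odd}. -/
theorem Hn_has_gflow (n m : ℕ) (hn : 2 ≤ n) (hm : 2 * n < m) :
    ∃ prec : (Fin n ⊕ Fin (m - n)) → (Fin n ⊕ Fin (m - n)) → Prop,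
      (∀ v, ¬ prec v v) ∧
      (∀ a b c, prec a b → prec b c → prec a c) ∧
      (∀ i, i ∉ Oset n m → ∀ j ∈ gfun n m i, j ∉ Iset n m) ∧
      (∀ i, i ∉ Oset n m → ∀ j ∈ gfun n m i, prec i j) ∧
      (∀ i, i ∉ Oset n m → ∀ j,
        Odd ((((HC n m)ᶜ).neighborSet j ∩ gfun n m i).ncard) → j = i ∨ prec i j) ∧
      (∀ i, i ∉ Oset n m → Odd ((((HC n m)ᶜ).neighborSet i ∩ gfun n m i).ncard)) := by
  refine ⟨fun x y => gflowRank n m x < gflowRank n m y, fun _ => lt_irrefl _,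
    fun _ _ _ => lt_trans, ?_, ?_, ?_, ?_⟩
  · rintro i - _ ⟨a, rfl, -⟩ ⟨j, hj⟩
    exact inr_ne_inl hj
  · rintro (j | c) hi x hx
    · obtain ⟨a, rfl, -⟩ := hx
      exact gflowRank_inl_lt_inr j a
    · have hc := le_of_inr_notMem_Oset hi
      rw [gfun_inr_of_le hn c hc] at hx
      rcases hx with rfl | rfl <;>
        exact gflowRank_inr_lt_inr (by rw [Fin.lt_def]; simp only; omega)
  · rintro (j | c) hi (j' | k) hx
    · by_cases hj : (j : ℕ) + 1 < n
      · exact .inl (congrArg inl ((inl_mem_oddNeighborSet_gfun_inl_iff hm hj j').1 hx))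
      · obtain rfl | hne := eq_or_ne j' j
        · exact .inl rfl
        · exact .inr (gflowRank_inl_lt_inl (by omega) hne)
    · exact .inr (gflowRank_inl_lt_inr j k)
    · exact absurd hx (inl_notMem_oddNeighborSet_gfun_inr hn (le_of_inr_notMem_Oset hi) j')
    · obtain hkc | rfl :=
        (le_of_inr_mem_oddNeighborSet_gfun_inr hn (le_of_inr_notMem_Oset hi) hx).lt_or_eq
      · exact .inr (gflowRank_inr_lt_inr hkc)
      · exact .inl rfl
  · rintro (j | c) hi
    · by_cases hj : (j : ℕ) + 1 < n
      · exact (inl_mem_oddNeighborSet_gfun_inl_iff hm hj j).2 rfl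
      · exact inl_mem_oddNeighborSet_gfun_inl_of_add_one_eq hm (by omega)
    · exact inr_mem_oddNeighborSet_gfun_inr hn (le_of_inr_notMem_Oset hi)
end

section
/- Consider the open graph (H_n, I, O). For any strict linear order < on O^C, if w is the <-minimal element of O^C (the first qubit to be measured), then |Q_w ∪ {w}| ≥ m − 2. In particular, any direct realisation of a measurement pattern on (H_n, I, O) requires at least m − 2 physical qubits to be present simultaneously. -/
section HC

variable {n m : ℕ}

lemma HC_adj_inl_inr (j : Fin n) (k : Fin (m - n)) :
    (HC n m).Adj (.inl j) (.inr k) ↔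
      ((j : ℕ) = k ∧ (j : ℕ) + 1 ≤ n - 2) ∨ ((j : ℕ) + 1 = n - 1 ∧ (k : ℕ) + 1 = m - n) := by
  simp [HC]

lemma HC_adj_inr_inl (k : Fin (m - n)) (j : Fin n) :
    (HC n m).Adj (.inr k) (.inl j) ↔
      ((j : ℕ) = k ∧ (j : ℕ) + 1 ≤ n - 2) ∨ ((j : ℕ) + 1 = n - 1 ∧ (k : ℕ) + 1 = m - n) := by
  rw [SimpleGraph.adj_comm, HC_adj_inl_inr]

lemma HC_adj_inr_inr (a b : Fin (m - n)) :
    (HC n m).Adj (.inr a) (.inr b) ↔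
      ((b : ℕ) = a + 1 ∧ n - 1 ≤ (a : ℕ)) ∨ ((a : ℕ) = b + 1 ∧ n - 1 ≤ (b : ℕ)) := by
  simp only [HC, SimpleGraph.fromRel_adj]
  constructor
  · rintro ⟨-, h⟩
    simpa using h
  · intro h
    refine ⟨fun hab => ?_, by simpa using h⟩
    obtain rfl := Sum.inr.inj hab
    omega

lemma HC_not_adj_inl_inl (i j : Fin n) : ¬ (HC n m).Adj (.inl i) (.inl j) := by
  simp [HC]

/- Neighbours are located through their indices in `ℕ ⊕ ℕ`, so that the candidate neighbours can
be named without proving that their indices are in range. -/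
lemma exists_map_val_neighborSet_HC_subset_pair (w : Fin n ⊕ Fin (m - n)) :
    ∃ c₁ c₂ : ℕ ⊕ ℕ, Sum.map Fin.val Fin.val '' (HC n m).neighborSet w ⊆ {c₁, c₂} := by
  suffices ∃ c₁ c₂ : ℕ ⊕ ℕ, ∀ v, (HC n m).Adj w v →
      Sum.map Fin.val Fin.val v = c₁ ∨ Sum.map Fin.val Fin.val v = c₂ by
    obtain ⟨c₁, c₂, h⟩ := this
    exact ⟨c₁, c₂, by rintro _ ⟨v, hv, rfl⟩; exact h v hv⟩
  rcases w with j | a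
  · refine ⟨.inr j, .inr (m - n - 1), ?_⟩
    rintro (i | k) hadj <;>
      simp only [HC_not_adj_inl_inl, HC_adj_inl_inr, Sum.map_inr, Sum.inr.injEq] at hadj ⊢
    omega
  by_cases hin : (a : ℕ) + 1 ≤ n - 2
  · refine ⟨.inl a, .inl (n - 2), ?_⟩
    rintro (i | k) hadj <;>
      simp only [HC_adj_inr_inl, HC_adj_inr_inr, Sum.map_inl, Sum.map_inr, Sum.inl.injEq,
        reduceCtorEq, or_self] at hadj ⊢ <;> omega
  by_cases hlast : (a : ℕ) + 1 = m - n
  · refine ⟨.inl (n - 2), .inr (a - 1), ?_⟩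
    rintro (i | k) hadj <;>
      simp only [HC_adj_inr_inl, HC_adj_inr_inr, Sum.map_inl, Sum.map_inr, Sum.inl.injEq,
        Sum.inr.injEq, reduceCtorEq, or_false, false_or] at hadj ⊢ <;> omega
  · refine ⟨.inr (a + 1), .inr (a - 1), ?_⟩
    rintro (i | k) hadj <;>
      simp only [HC_adj_inr_inl, HC_adj_inr_inr, Sum.map_inl, Sum.map_inr, Sum.inr.injEq,
        reduceCtorEq, or_self] at hadj ⊢ <;> omega

lemma ncard_neighborSet_HC_le_two (w : Fin n ⊕ Fin (m - n)) :
    ((HC n m).neighborSet w).ncard ≤ 2 := by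
  obtain ⟨c₁, c₂, hsub⟩ := exists_map_val_neighborSet_HC_subset_pair w
  calc ((HC n m).neighborSet w).ncard
      ≤ ({c₁, c₂} : Set (ℕ ⊕ ℕ)).ncard :=
        Set.ncard_le_ncard_of_injOn _ (fun v hv => hsub ⟨v, hv, rfl⟩)
          (Sum.map_injective.2 ⟨Fin.val_injective, Fin.val_injective⟩).injOn
    _ ≤ 2 := (Set.ncard_insert_le _ _).trans (by rw [Set.ncard_singleton])

end HC

section Measurement

variable {V : Type*} {O : Set V} {lt : V → V → Prop} {w : V}

lemma measuredSet_eq_empty_of_forall_lt (hirr : ∀ v, v ∉ O → ¬ lt v v)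
    (htrans : ∀ a b c, a ∉ O → b ∉ O → c ∉ O → lt a b → lt b c → lt a c)
    (hw : w ∉ O) (hmin : ∀ v, v ∉ O → v ≠ w → lt w v) :
    measuredSet O lt w = ∅ := by
  refine Set.eq_empty_of_forall_notMem fun v ⟨hv, hvw⟩ => hirr w hw ?_
  obtain rfl | hne := eq_or_ne v w
  · exact hvw
  · exact htrans w v w hw hv hw (hmin v hv hne) hvw

lemma neighborSet_subset_requiredSet (G : SimpleGraph V) (I : Set V)
    (hM : measuredSet O lt w = ∅) : G.neighborSet w ⊆ requiredSet G I O lt w := by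
  intro v hv
  refine Or.inl (Or.inl ⟨hv, ?_⟩)
  simp only [unmeasuredSet, hM, Set.empty_union, Set.mem_compl_singleton_iff]
  exact (G.ne_of_adj hv).symm

lemma compl_neighborSet_subset_requiredSet_compl_union (G : SimpleGraph V) (I : Set V)
    (hM : measuredSet O lt w = ∅) :
    (G.neighborSet w)ᶜ ⊆ requiredSet Gᶜ I O lt w ∪ {w} := by
  calc (G.neighborSet w)ᶜ ⊆ (G.neighborSet w)ᶜ \ {w} ∪ {w} := Set.subset_sdiff_union _ _
    _ = Gᶜ.neighborSet w ∪ {w} := by rw [SimpleGraph.neighborSet_compl]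
    _ ⊆ _ := Set.union_subset_union_left _ (neighborSet_subset_requiredSet Gᶜ I hM)

end Measurement

theorem Hn_requires_m_sub_two_qubits_general (n m : ℕ)
    (lt : (Fin n ⊕ Fin (m - n)) → (Fin n ⊕ Fin (m - n)) → Prop)
    (hlt_irr : ∀ v, v ∉ Oset n m → ¬ lt v v)
    (hlt_trans : ∀ a b c, a ∉ Oset n m → b ∉ Oset n m → c ∉ Oset n m →
      lt a b → lt b c → lt a c)
    (w : Fin n ⊕ Fin (m - n)) (hw : w ∉ Oset n m)
    (hmin : ∀ v, v ∉ Oset n m → v ≠ w → lt w v) :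
    m - 2 ≤ (requiredSet ((HC n m)ᶜ) (Iset n m) (Oset n m) lt w ∪ {w}).ncard := by
  have hM := measuredSet_eq_empty_of_forall_lt hlt_irr hlt_trans hw hmin
  have hdeg := ncard_neighborSet_HC_le_two (n := n) (m := m) w
  have hcard : Nat.card (Fin n ⊕ Fin (m - n)) = n + (m - n) := by simp
  calc m - 2 ≤ Nat.card (Fin n ⊕ Fin (m - n)) - ((HC n m).neighborSet w).ncard := by omega
    _ = ((HC n m).neighborSet w)ᶜ.ncard := (Set.ncard_compl _).symm
    _ ≤ _ := Set.ncard_le_ncard (compl_neighborSet_subset_requiredSet_compl_union _ _ hM)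

/-- Consider the open graph (H_n, I, O), H_n = (H^C_n)ᶜ.  For any strict
linear order < on O^C, if w is the <-minimal element of O^C (the first qubit to be
measured), then |Q_w ∪ {w}| ≥ m − 2.  Hence any direct realisation of a measurement
pattern on (H_n, I, O) requires at least m − 2 simultaneously present physical qubits. -/
theorem Hn_requires_m_sub_two_qubits (n m : ℕ) (hn : 2 ≤ n) (hm : 2 * n < m)
    (lt : (Fin n ⊕ Fin (m - n)) → (Fin n ⊕ Fin (m - n)) → Prop)
    (hlt_irr : ∀ v, v ∉ Oset n m → ¬ lt v v)
    (hlt_trans : ∀ a b c, a ∉ Oset n m → b ∉ Oset n m → c ∉ Oset n m →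
      lt a b → lt b c → lt a c)
    (hlt_total : ∀ u v, u ∉ Oset n m → v ∉ Oset n m → u ≠ v → lt u v ∨ lt v u)
    (w : Fin n ⊕ Fin (m - n)) (hw : w ∉ Oset n m)
    (hmin : ∀ v, v ∉ Oset n m → v ≠ w → lt w v) :
    m - 2 ≤ (requiredSet ((HC n m)ᶜ) (Iset n m) (Oset n m) lt w ∪ {w}).ncard :=
  Hn_requires_m_sub_two_qubits_general n m lt hlt_irr hlt_trans w hw hmin
end

section
/- Define f on O^C of H'_n by f(i_j) = v_j for 1 ≤ j ≤ n−2, f(i_{n−1}) = v_{m'}, f(i_n) = y, f(v_j) = v_{j−1} for n+1 ≤ j ≤ m', and f(y) = v_{n−1}. Then there exists a strict partial order ≺ on the vertex set of H'_n such that (f, ≺) is a flow on the open graph (H'_n, I, O). -/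
/-- The graph H'_n, obtained from H^C_n by adjoining one new vertex y = `none`
adjacent to all m vertices of H^C_n. -/
def Hp (n m : ℕ) : SimpleGraph (Option (Fin n ⊕ Fin (m - n))) :=
  SimpleGraph.fromRel (fun u v =>
    u = none ∨ (∃ a b, u = some a ∧ v = some b ∧ (HC n m).Adj a b))

/-- The input set I = {i_1, …, i_n} of H'_n. -/
def IsetP (n m : ℕ) : Set (Option (Fin n ⊕ Fin (m - n))) :=
  {x | ∃ j : Fin n, x = some (Sum.inl j)}

/-- The output set O = {v_1, …, v_n} of H'_n. -/
def OsetP (n m : ℕ) : Set (Option (Fin n ⊕ Fin (m - n))) :=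
  {x | ∃ k : Fin (m - n), x = some (Sum.inr k) ∧ (k : ℕ) < n}

/-- The candidate flow function f on O^C of H'_n:
f(i_j) = v_j for 1 ≤ j ≤ n−2, f(i_{n−1}) = v_{m'}, f(i_n) = y,
f(v_j) = v_{j−1} for n+1 ≤ j ≤ m', and f(y) = v_{n−1}  (1-indexed, m' = m − n).
(On the output vertices, where a flow function need not be defined, it takes the
irrelevant value `none`.) -/
def ffun (n m : ℕ) (hm : 2 * n < m) :
    Option (Fin n ⊕ Fin (m - n)) → Option (Fin n ⊕ Fin (m - n))
  | none => some (Sum.inr ⟨n - 2, by omega⟩)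
  | some (Sum.inl j) =>
      if (j : ℕ) + 1 ≤ n - 2 then some (Sum.inr ⟨(j : ℕ), by have := j.isLt; omega⟩)
      else if (j : ℕ) + 1 = n - 1 then some (Sum.inr ⟨m - n - 1, by omega⟩)
      else none
  | some (Sum.inr b) =>
      if n ≤ (b : ℕ) then some (Sum.inr ⟨(b : ℕ) - 1, by have := b.isLt; omega⟩)
      else none

/-!
Order the vertices of H'_n as i_n, then the other inputs, then the path v_{m'}, v_{m'-1}, …, v_n
walked from its far end, then y, then v_1, …, v_{n-1}. Each non-output vertex lies below its image
under f, and every other neighbour of f(i) lies above i: f(y) = v_{n-1} is adjacent to y alone,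
f(i_j) = v_j to i_j and y, f(i_{n-1}) = v_{m'} additionally to v_{m'-1}, f(v_j) = v_{j-1} to v_j,
y and possibly v_{j-2}, and f(i_n) = y to everything, while i_n is the least vertex.
-/

section Flow
variable {V : Type*}

def SatisfiesFlowAt (G : SimpleGraph V) (I : Set V) (f : V → V) (r : V → ℕ) (i : V) : Prop :=
  f i ∉ I ∧ r i < r (f i) ∧ (∀ j, G.Adj (f i) j → j = i ∨ r i < r j) ∧ G.Adj i (f i)

theorem exists_flow_of_rank {G : SimpleGraph V} {I O : Set V} {f : V → V} (r : V → ℕ)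
    (h : ∀ i ∉ O, SatisfiesFlowAt G I f r i) :
    ∃ prec : V → V → Prop,
      (∀ v, ¬ prec v v) ∧
      (∀ a b c, prec a b → prec b c → prec a c) ∧
      (∀ i, i ∉ O → f i ∉ I) ∧
      (∀ i, i ∉ O → prec i (f i)) ∧
      (∀ i, i ∉ O → ∀ j, G.Adj (f i) j → j = i ∨ prec i j) ∧
      (∀ i, i ∉ O → G.Adj i (f i)) :=
  ⟨fun a b => r a < r b, fun _ => lt_irrefl _, fun _ _ _ => lt_trans,
    fun i hi => (h i hi).1, fun i hi => (h i hi).2.1, fun i hi => (h i hi).2.2.1,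
    fun i hi => (h i hi).2.2.2⟩

end Flow

namespace HC
variable {n m : ℕ}

@[simp] theorem adj_inr_inl {c : Fin (m - n)} {j : Fin n} :
    (HC n m).Adj (.inr c) (.inl j) ↔
      ((j : ℕ) = c ∧ (j : ℕ) + 1 ≤ n - 2) ∨ ((j : ℕ) + 1 = n - 1 ∧ (c : ℕ) + 1 = m - n) := by
  simp [HC, SimpleGraph.fromRel_adj, eq_comm]

@[simp] theorem adj_inl_inr {j : Fin n} {c : Fin (m - n)} :
    (HC n m).Adj (.inl j) (.inr c) ↔
      ((j : ℕ) = c ∧ (j : ℕ) + 1 ≤ n - 2) ∨ ((j : ℕ) + 1 = n - 1 ∧ (c : ℕ) + 1 = m - n) := by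
  rw [SimpleGraph.adj_comm, adj_inr_inl]

@[simp] theorem adj_inr_inr {c d : Fin (m - n)} :
    (HC n m).Adj (.inr c) (.inr d) ↔
      ((d : ℕ) = c + 1 ∧ n - 1 ≤ (c : ℕ)) ∨ ((c : ℕ) = d + 1 ∧ n - 1 ≤ (d : ℕ)) := by
  simp only [HC, SimpleGraph.fromRel_adj]
  grind

end HC

namespace Hp
variable {n m : ℕ}

@[simp] theorem adj_none {v : Option (Fin n ⊕ Fin (m - n))} : (Hp n m).Adj none v ↔ v ≠ none := by
  simp [Hp, SimpleGraph.fromRel_adj, ne_comm]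

@[simp] theorem adj_some_none {a : Fin n ⊕ Fin (m - n)} : (Hp n m).Adj (some a) none :=
  (Hp n m).adj_symm (adj_none.2 (Option.some_ne_none a))

@[simp] theorem adj_some_some {a b : Fin n ⊕ Fin (m - n)} :
    (Hp n m).Adj (some a) (some b) ↔ (HC n m).Adj a b := by
  simp only [Hp, SimpleGraph.fromRel_adj, reduceCtorEq, false_or, Option.some.injEq,
    exists_and_left, exists_eq_left']
  exact ⟨fun h => h.2.elim id (·.symm), fun h => ⟨by simpa using h.ne, .inl h⟩⟩

-- `v_k` on the path (`k ≥ n`, 1-indexed) gets rank `m' + 2 - k`.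
def flowRank (n m : ℕ) : Option (Fin n ⊕ Fin (m - n)) → ℕ
  | none => m - 2 * n + 3
  | some (.inl j) => if (j : ℕ) + 1 = n then 0 else 1
  | some (.inr b) => if n - 1 ≤ (b : ℕ) then m - n + 1 - b else m - 2 * n + 4

variable (hm : 2 * n < m)

theorem ffun_none : ffun n m hm none = some (.inr ⟨n - 2, by omega⟩) := rfl

theorem ffun_inl_of_le {j : Fin n} (hj : (j : ℕ) + 1 ≤ n - 2) :
    ffun n m hm (some (.inl j)) = some (.inr ⟨j, by omega⟩) :=
  if_pos hj

theorem ffun_inl_of_eq_sub_one {j : Fin n} (hj : (j : ℕ) + 1 = n - 1) :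
    ffun n m hm (some (.inl j)) = some (.inr ⟨m - n - 1, by omega⟩) :=
  (if_neg (by omega)).trans (if_pos hj)

theorem ffun_inl_of_eq {j : Fin n} (hj : (j : ℕ) + 1 = n) : ffun n m hm (some (.inl j)) = none :=
  (if_neg (by omega)).trans (if_neg (by omega))

theorem ffun_inr {b : Fin (m - n)} (hb : n ≤ (b : ℕ)) :
    ffun n m hm (some (.inr b)) = some (.inr ⟨b - 1, by omega⟩) :=
  if_pos hb

theorem satisfiesFlowAt_none (hn : 2 ≤ n) :
    SatisfiesFlowAt (Hp n m) (IsetP n m) (ffun n m hm) (flowRank n m) none := by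
  rw [SatisfiesFlowAt, ffun_none hm]
  refine ⟨by simp [IsetP], by simp only [flowRank]; split_ifs <;> omega, ?_, by simp⟩
  rintro (_ | j | d) h
  · exact .inl rfl
  · simp only [adj_some_some, HC.adj_inr_inl] at h; omega
  · simp only [adj_some_some, HC.adj_inr_inr] at h; omega

theorem satisfiesFlowAt_inl_of_le {j : Fin n} (hj : (j : ℕ) + 1 ≤ n - 2) :
    SatisfiesFlowAt (Hp n m) (IsetP n m) (ffun n m hm) (flowRank n m) (some (.inl j)) := by
  rw [SatisfiesFlowAt, ffun_inl_of_le hm hj]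
  refine ⟨by simp [IsetP], by simp only [flowRank]; split_ifs <;> omega, ?_, ?_⟩
  · rintro (_ | j' | d) h
    · simp only [flowRank]; split_ifs <;> omega
    · simp only [adj_some_some, HC.adj_inr_inl] at h; left; congr; omega
    · simp only [adj_some_some, HC.adj_inr_inr] at h; omega
  · simp [hj]

theorem satisfiesFlowAt_inl_of_eq_sub_one {j : Fin n} (hj : (j : ℕ) + 1 = n - 1) :
    SatisfiesFlowAt (Hp n m) (IsetP n m) (ffun n m hm) (flowRank n m) (some (.inl j)) := by
  rw [SatisfiesFlowAt, ffun_inl_of_eq_sub_one hm hj]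
  refine ⟨by simp [IsetP], by simp only [flowRank]; split_ifs <;> omega, ?_, ?_⟩
  · rintro (_ | j' | d) h
    · simp only [flowRank]; split_ifs <;> omega
    · simp only [adj_some_some, HC.adj_inr_inl] at h; left; congr; omega
    · simp only [adj_some_some, HC.adj_inr_inr] at h; right; simp only [flowRank]; split_ifs <;> omega
  · simp only [adj_some_some, HC.adj_inl_inr]; omega

theorem satisfiesFlowAt_inl_of_eq {j : Fin n} (hj : (j : ℕ) + 1 = n) :
    SatisfiesFlowAt (Hp n m) (IsetP n m) (ffun n m hm) (flowRank n m) (some (.inl j)) := by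
  rw [SatisfiesFlowAt, ffun_inl_of_eq hm hj]
  refine ⟨by simp [IsetP], by simp [flowRank, hj], ?_, by simp⟩
  rintro (_ | j' | d) h
  · simp at h
  · simp only [flowRank, Option.some.injEq, Sum.inl.injEq, Fin.ext_iff]; split_ifs <;> omega
  · right; simp only [flowRank]; split_ifs <;> omega

theorem satisfiesFlowAt_inr (hn : 0 < n) {b : Fin (m - n)} (hb : n ≤ (b : ℕ)) :
    SatisfiesFlowAt (Hp n m) (IsetP n m) (ffun n m hm) (flowRank n m) (some (.inr b)) := by
  rw [SatisfiesFlowAt, ffun_inr hm hb]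
  refine ⟨by simp [IsetP], by simp only [flowRank]; split_ifs <;> omega, ?_, ?_⟩
  · rintro (_ | j' | d) h
    · simp only [flowRank]; split_ifs <;> omega
    · simp only [adj_some_some, HC.adj_inr_inl] at h; omega
    · simp only [adj_some_some, HC.adj_inr_inr] at h
      rcases h with h | h
      · left; congr; omega
      · right; simp only [flowRank]; split_ifs <;> omega
  · simp only [adj_some_some, HC.adj_inr_inr]; omega

theorem satisfiesFlowAt_of_notMem_osetP (hn : 2 ≤ n) {i : Option (Fin n ⊕ Fin (m - n))}
    (hi : i ∉ OsetP n m) :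
    SatisfiesFlowAt (Hp n m) (IsetP n m) (ffun n m hm) (flowRank n m) i := by
  rcases i with _ | j | b
  · exact satisfiesFlowAt_none hm hn
  · obtain hj | hj | hj : (j : ℕ) + 1 ≤ n - 2 ∨ (j : ℕ) + 1 = n - 1 ∨ (j : ℕ) + 1 = n := by omega
    · exact satisfiesFlowAt_inl_of_le hm hj
    · exact satisfiesFlowAt_inl_of_eq_sub_one hm hj
    · exact satisfiesFlowAt_inl_of_eq hm hj
  · exact satisfiesFlowAt_inr hm (by omega) (not_lt.1 fun hb => hi ⟨b, rfl, hb⟩)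

end Hp

/-- With f as above, there exists a strict partial order ≺ on the vertex
set of H'_n such that (f, ≺) is a flow on the open graph (H'_n, I, O): f maps O^C into
I^C and for every i ∈ O^C, (F1) i ≺ f(i), (F2) every j ∈ N(f(i)) satisfies j = i or
i ≺ j, and (F3) i ∈ N(f(i)). -/
theorem Hp_has_flow (n m : ℕ) (hn : 2 ≤ n) (hm : 2 * n < m) :
    ∃ prec : Option (Fin n ⊕ Fin (m - n)) → Option (Fin n ⊕ Fin (m - n)) → Prop,
      (∀ v, ¬ prec v v) ∧
      (∀ a b c, prec a b → prec b c → prec a c) ∧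
      (∀ i, i ∉ OsetP n m → ffun n m hm i ∉ IsetP n m) ∧
      (∀ i, i ∉ OsetP n m → prec i (ffun n m hm i)) ∧
      (∀ i, i ∉ OsetP n m → ∀ j, (Hp n m).Adj (ffun n m hm i) j → j = i ∨ prec i j) ∧
      (∀ i, i ∉ OsetP n m → (Hp n m).Adj i (ffun n m hm i)) :=
  exists_flow_of_rank (Hp.flowRank n m) fun _ hi => Hp.satisfiesFlowAt_of_notMem_osetP hm hn hi
end
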